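/- Fix η < 0 with 1 + pβη < 0, where p = ξ/(-τ). Then along the ray t = η·x, for all sufficiently small x > 0 the focusing-normalized Barenblatt pressure satisfies V_M(x, ξ, ηx, τ) = 0, matching g_{pβ}(x, ηx) = 0. -/

import Mathlib

/-!
On the ray `t = η x` the Barenblatt base is `1 - t/τ = 1 - (η/τ) x`, and `(1 - (η/τ) x)^β`
leaves the value `1` at `x = 0` with slope `-βη/τ`, which is steeper than the slope `-1/ξ` of
`1 - x/ξ` exactly when `1 + pβη < 0`. Hence for small `x > 0` we have
`(1 - t/τ)^β < 1 - x/ξ`, the quotient inside the `max` is at least `1`, and the pressure vanishes.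
The same sign condition makes `x + pβ t = x (1 + pβη)` negative, so `g_{pβ}` vanishes too.
-/

open Filter Topology

theorem HasDerivAt.eventually_nhdsGT_lt {f g : ℝ → ℝ} {f' g' a : ℝ} (hf : HasDerivAt f f' a)
    (hg : HasDerivAt g g' a) (hfg : f a = g a) (hlt : f' < g') :
    ∀ᶠ x in 𝓝[>] a, f x < g x := by
  have hslope := hasDerivAt_iff_tendsto_slope.mp (hg.sub hf)
  have hpos : ∀ᶠ x in 𝓝[>] a, 0 < slope (g - f) a x :=
    (hslope.mono_left (nhdsWithin_mono _ fun _ hx => ne_of_gt hx)).eventually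
      (eventually_gt_nhds (sub_pos.mpr hlt))
  filter_upwards [hpos, self_mem_nhdsWithin] with x hx hax
  rw [slope_def_field, Pi.sub_apply, Pi.sub_apply, hfg, sub_self, sub_zero] at hx
  exact sub_pos.mp ((div_pos_iff_of_pos_right (sub_pos.mpr hax)).mp hx)

theorem eventually_nhdsGT_one_sub_mul_rpow_lt {r β c : ℝ} (h : c < β * r) :
    ∀ᶠ x in 𝓝[>] (0 : ℝ), 0 < 1 - r * x ∧ (1 - r * x) ^ β < 1 - c * x := by
  have hbase : HasDerivAt (fun x : ℝ => 1 - r * x) (-r) 0 := by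
    simpa using ((hasDerivAt_id (0 : ℝ)).const_mul r).const_sub 1
  have hpow : HasDerivAt (fun x : ℝ => (1 - r * x) ^ β) (-(r * β)) 0 := by
    simpa using hbase.rpow_const (p := β) (Or.inl (by simp))
  have hlin : HasDerivAt (fun x : ℝ => 1 - c * x) (-c) 0 := by
    simpa using ((hasDerivAt_id (0 : ℝ)).const_mul c).const_sub 1
  have hbase_pos : ∀ᶠ x in 𝓝 (0 : ℝ), 0 < 1 - r * x :=
    hbase.continuousAt.eventually (lt_mem_nhds (by simp))
  exact (hbase_pos.filter_mono nhdsWithin_le_nhds).and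
    (hpow.eventually_nhdsGT_lt hlin (by simp) (by linarith))

theorem one_sub_sq_div_rpow_nonpos {b y β : ℝ} (hb : 0 < b) (hy : b ^ β ≤ y) :
    1 - y ^ 2 / b ^ (2 * β) ≤ 0 := by
  have hbβ : 0 < b ^ β := Real.rpow_pos_of_pos hb β
  rw [mul_comm, Real.rpow_mul hb.le, Real.rpow_two, sub_nonpos, one_le_div (by positivity)]
  exact pow_le_pow_left₀ hbβ.le hy 2

theorem stmt_8_general (τ ξ : ℝ) (hτ : τ < 0) (hξ : 0 < ξ)
    (β p : ℝ) (hp : p = ξ / (-τ))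
    (V : ℝ → ℝ → ℝ)
    (hV : ∀ x t, V x t = ξ ^ 2 * β / (2 * (-τ)) * (1 - t / τ) ^ (2 * β - 1) *
      max (1 - (1 - x / ξ) ^ 2 / (1 - t / τ) ^ (2 * β)) 0)
    (g : ℝ → ℝ → ℝ → ℝ) (hg : ∀ c x t, g c x t = c * max (x + c * t) 0)
    (η : ℝ) (hneg : 1 + p * β * η < 0) :
    ∃ δ > 0, ∀ x : ℝ, 0 < x → x < δ →
      V x (η * x) = 0 ∧ g (p * β) x (η * x) = 0 := by
  have hslope : 1 / ξ < β * (η / τ) := by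
    have hcross : ξ * β * η < τ := by
      rw [hp, div_mul_eq_mul_div, div_mul_eq_mul_div] at hneg
      linarith [(div_lt_iff₀ (neg_pos.mpr hτ)).mp (show ξ * β * η / -τ < -1 by linarith)]
    rw [div_lt_iff₀ hξ, mul_comm, ← mul_assoc, ← mul_div_assoc, one_lt_div_of_neg hτ]
    exact hcross
  obtain ⟨δ, hδ, hsub⟩ :=
    mem_nhdsGT_iff_exists_Ioo_subset.mp (eventually_nhdsGT_one_sub_mul_rpow_lt hslope)
  refine ⟨δ, hδ, fun x hx hxδ => ⟨?_, ?_⟩⟩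
  · obtain ⟨hbase, hlt⟩ := hsub ⟨hx, hxδ⟩
    rw [div_mul_eq_mul_div] at hbase hlt
    rw [one_div_mul_eq_div] at hlt
    rw [hV, max_eq_right (one_sub_sq_div_rpow_nonpos hbase hlt.le), mul_zero]
  · have hray : x + p * β * (η * x) < 0 := by nlinarith
    rw [hg, max_eq_right hray.le, mul_zero]

/-- Along a ray `t = η·x` with `η < 0` and `1 + pβη < 0`, the focusing-normalized Barenblatt
pressure vanishes for all sufficiently small `x > 0`, matching `g_{pβ}(x, ηx) = 0`. -/
theorem stmt_8 (m τ ξ : ℝ) (hm : 1 < m) (hτ : τ < 0) (hξ : 0 < ξ)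
    (β p : ℝ) (hβ : β = 1 / (m - 1)) (hp : p = ξ / (-τ))
    (V : ℝ → ℝ → ℝ)
    (hV : ∀ x t, V x t = ξ ^ 2 * β / (2 * (-τ)) * (1 - t / τ) ^ (2 * β - 1) *
      max (1 - (1 - x / ξ) ^ 2 / (1 - t / τ) ^ (2 * β)) 0)
    (g : ℝ → ℝ → ℝ → ℝ) (hg : ∀ c x t, g c x t = c * max (x + c * t) 0)
    (η : ℝ) (hη : η < 0) (hneg : 1 + p * β * η < 0) :
    ∃ δ > 0, ∀ x : ℝ, 0 < x → x < δ →
      V x (η * x) = 0 ∧ g (p * β) x (η * x) = 0 :=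
  stmt_8_general τ ξ hτ hξ β p hp V hV g hg η hneg
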